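/- arXiv:nlin/0402052 — 5 statements merged into one kernel-verified Lean document; each statement's English description precedes it below -/
import Mathlib

section
/- Let T = p∂_zz + q∂_z + r with smooth coefficients, with p nowhere zero, and suppose Tφ = λ₀φ with (log φ)' = a/b for smooth functions a, b with b nowhere zero. Then T = BA + λ₀, where A = b∂_z - a and B = (p/b)(∂_z + (a - b')/b + q/p). -/
/-- for `T = p ∂_zz + q ∂_z + r` with `Tφ = λ₀ φ` and `(log φ)' = a/b`,
one has the factorization `T = B A + λ₀`, with `A = b ∂_z - a` and
`B = (p/b)(∂_z + (a - b')/b + q/p)`. -/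
theorem darboux_general_factorization
    (p q r a b φ : ℝ → ℝ) (lam0 : ℝ)
    (hp : ContDiff ℝ (⊤ : ℕ∞) p) (hq : ContDiff ℝ (⊤ : ℕ∞) q) (hr : ContDiff ℝ (⊤ : ℕ∞) r)
    (ha : ContDiff ℝ (⊤ : ℕ∞) a) (hb : ContDiff ℝ (⊤ : ℕ∞) b)
    (hφ : ContDiff ℝ (⊤ : ℕ∞) φ)
    (hp0 : ∀ z, p z ≠ 0) (hb0 : ∀ z, b z ≠ 0) (hφ0 : ∀ z, φ z ≠ 0)
    (hlog : ∀ z, deriv φ z / φ z = a z / b z)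
    (heig : ∀ z, p z * deriv (deriv φ) z + q z * deriv φ z + r z * φ z = lam0 * φ z) :
    ∀ f : ℝ → ℝ, ContDiff ℝ 2 f → ∀ z,
      (p z / b z) * (deriv (fun w => b w * deriv f w - a w * f w) z
          + ((a z - deriv b z) / b z + q z / p z) * (b z * deriv f z - a z * f z))
        + lam0 * f z
      = p z * deriv (deriv f) z + q z * deriv f z + r z * f z := by
  intro f hf z
  have hfd : Differentiable ℝ f := hf.differentiable (by norm_num)
  have hf1 : ContDiff ℝ 1 (deriv f) :=
    (contDiff_succ_iff_deriv.mp (show ContDiff ℝ (1+1) f by exact_mod_cast hf)).2.2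
  have Ha : HasDerivAt a (deriv a z) z := (ha.differentiable (by simp) z).hasDerivAt
  have Hb : HasDerivAt b (deriv b z) z := (hb.differentiable (by simp) z).hasDerivAt
  have Hf : HasDerivAt f (deriv f z) z := (hfd z).hasDerivAt
  have Hf' : HasDerivAt (deriv f) (deriv (deriv f) z) z :=
    (hf1.differentiable one_ne_zero z).hasDerivAt
  have h1 : ∀ w, deriv φ w = a w / b w * φ w := by
    intro w
    have h := hlog w
    rw [div_eq_div_iff (hφ0 w) (hb0 w)] at h
    have hbw := hb0 w
    field_simp
    linarith
  have Hφ1 : HasDerivAt φ (a z / b z * φ z) z := by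
    rw [← h1 z]; exact (hφ.differentiable (by simp) z).hasDerivAt
  have Hφ2 : HasDerivAt (deriv φ)
      ((deriv a z * b z - a z * deriv b z) / (b z)^2 * φ z
        + a z / b z * (a z / b z * φ z)) z := by
    have H : HasDerivAt (fun w => a w / b w * φ w)
        ((deriv a z * b z - a z * deriv b z) / (b z)^2 * φ z
          + a z / b z * (a z / b z * φ z)) z :=
      (Ha.div Hb (hb0 z)).mul Hφ1
    exact H.congr_of_eventuallyEq (Filter.Eventually.of_forall fun w => h1 w)
  have h2 : deriv (deriv φ) z
      = (deriv a z * b z - a z * deriv b z) / (b z)^2 * φ z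
        + a z / b z * (a z / b z * φ z) := Hφ2.deriv
  have h3 : deriv (fun w => b w * deriv f w - a w * f w) z
      = (deriv b z * deriv f z + b z * deriv (deriv f) z)
        - (deriv a z * f z + a z * deriv f z) :=
    ((Hb.mul Hf').sub (Ha.mul Hf)).deriv
  have ER : p z * (deriv a z * b z - a z * deriv b z) + p z * (a z)^2
      + q z * a z * b z + r z * (b z)^2 = lam0 * (b z)^2 := by
    have h4 := heig z
    rw [h2, h1 z] at h4
    have hbz := hb0 z
    have key : ((p z * (deriv a z * b z - a z * deriv b z) + p z * (a z)^2
        + q z * a z * b z + r z * (b z)^2 - lam0 * (b z)^2) * φ z) * (b z)^3 = 0 := by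
      field_simp at h4
      linear_combination (b z)^3 * h4
    have key2 := (mul_eq_zero.mp key).resolve_right (pow_ne_zero 3 hbz)
    have h5 := (mul_eq_zero.mp key2).resolve_right (hφ0 z)
    linarith
  rw [h3]
  have hbz := hb0 z
  have hpz := hp0 z
  field_simp
  linear_combination (-(f z)) * ER
end

section
/- Let A = (p₂z² + p₁z + p₀)·z·∂_z - (a₂z² + p₀) with a₂ ≠ 0 and a₂/p₂ not a positive integer (or p₂ = 0). Then for each n ≥ 2, A[P_{n-2}] ⊕ ℝ = span{1, z², z³, ..., z^n}. -/
open Polynomial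

/-- The first-order operator `A = b ∂_z - a` acting on polynomials. -/
noncomputable def Aop (a b : Polynomial ℝ) : Polynomial ℝ →ₗ[ℝ] Polynomial ℝ where
  toFun f := b * derivative f - a * f
  map_add' f g := by simp [mul_add]; ring
  map_smul' c f := by simp [smul_sub, Polynomial.smul_eq_C_mul]; ring

lemma Aop_pow (a₂ p₀ p₁ p₂ : ℝ) (k : ℕ) :
    Aop (C a₂ * X ^ 2 + C p₀) ((C p₂ * X ^ 2 + C p₁ * X + C p₀) * X) (X ^ k)
    = C ((k : ℝ) * p₂ - a₂) * X ^ (k + 2) + C ((k : ℝ) * p₁) * X ^ (k + 1)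
      + C (((k : ℝ) - 1) * p₀) * X ^ k := by
  show ((C p₂ * X ^ 2 + C p₁ * X + C p₀) * X) * derivative (X ^ k)
      - (C a₂ * X ^ 2 + C p₀) * X ^ k = _
  cases k with
  | zero => simp; ring
  | succ m =>
    rw [derivative_X_pow, Nat.add_sub_cancel]
    simp only [C_sub, C_mul, C_add, C_1, Nat.cast_add, Nat.cast_one]
    ring

/-- for `A = (p₂z² + p₁z + p₀)·z·∂_z - (a₂z² + p₀)` with `a₂ ≠ 0`
and `a₂/p₂` not a positive integer (when `p₂ ≠ 0`), for each `n ≥ 2` one has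
`A[P_{n-2}] ⊕ ℝ = span{1, z², z³, …, zⁿ}`. -/
theorem m_one_deformed_flag
    (a₂ p₀ p₁ p₂ : ℝ) (ha₂ : a₂ ≠ 0)
    (hgen : p₂ ≠ 0 → ∀ j : ℕ, 0 < j → a₂ / p₂ ≠ (j : ℝ)) :
    ∀ n : ℕ, 2 ≤ n →
      Submodule.map
          (Aop (C a₂ * X ^ 2 + C p₀) ((C p₂ * X ^ 2 + C p₁ * X + C p₀) * X))
          (Polynomial.degreeLE ℝ ((n - 2 : ℕ) : WithBot ℕ))
        ⊔ Submodule.span ℝ {(1 : Polynomial ℝ)}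
      = Submodule.span ℝ
          (insert (1 : Polynomial ℝ) ((fun k => (X : Polynomial ℝ) ^ k) '' Set.Icc 2 n)) := by
  intro n hn
  set A := Aop (C a₂ * X ^ 2 + C p₀) ((C p₂ * X ^ 2 + C p₁ * X + C p₀) * X) with hA
  set S := Submodule.map A (Polynomial.degreeLE ℝ ((n - 2 : ℕ) : WithBot ℕ))
      ⊔ Submodule.span ℝ {(1 : Polynomial ℝ)} with hS
  set T := Submodule.span ℝ
      (insert (1 : Polynomial ℝ) ((fun k => (X : Polynomial ℝ) ^ k) '' Set.Icc 2 n)) with hT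
  -- coefficient nonvanishing
  have hc : ∀ j : ℕ, (j : ℝ) * p₂ - a₂ ≠ 0 := by
    intro j
    rcases eq_or_ne p₂ 0 with rfl | hp
    · simpa using ha₂
    · rcases Nat.eq_zero_or_pos j with rfl | hj
      · simpa using ha₂
      · intro h
        exact hgen hp j hj (by rw [div_eq_iff hp]; linarith)
  -- membership facts in T
  have h1T : (1 : Polynomial ℝ) ∈ T := Submodule.subset_span (Set.mem_insert _ _)
  have hXT : ∀ k, 2 ≤ k → k ≤ n → (X : Polynomial ℝ) ^ k ∈ T := fun k h2 h3 =>
    Submodule.subset_span (Set.mem_insert_iff.2 (Or.inr ⟨k, ⟨h2, h3⟩, rfl⟩))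
  have h1S : (1 : Polynomial ℝ) ∈ S :=
    Submodule.mem_sup_right (Submodule.subset_span rfl)
  -- the key induction: monomials X^k, 2 ≤ k ≤ n, lie in S
  have key : ∀ k, 2 ≤ k → k ≤ n → (X : Polynomial ℝ) ^ k ∈ S := by
    intro k
    induction k using Nat.strong_induction_on with
    | _ k ih =>
      intro hk2 hkn
      have hmem : (X : Polynomial ℝ) ^ (k - 2) ∈ Polynomial.degreeLE ℝ ((n - 2 : ℕ) : WithBot ℕ) := by
        rw [Polynomial.mem_degreeLE, degree_X_pow]
        exact_mod_cast Nat.sub_le_sub_right hkn 2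
      have hAS : A ((X : Polynomial ℝ) ^ (k - 2)) ∈ S :=
        Submodule.mem_sup_left (Submodule.mem_map_of_mem hmem)
      rw [hA, Aop_pow] at hAS
      have e1 : k - 2 + 2 = k := by omega
      have e2 : k - 2 + 1 = k - 1 := by omega
      rw [e1, e2] at hAS
      have ht1 : C (((k - 2 : ℕ) : ℝ) * p₁) * X ^ (k - 1) ∈ S := by
        rcases eq_or_lt_of_le hk2 with rfl | hk3
        · simp
        · rw [← smul_eq_C_mul]
          exact Submodule.smul_mem _ _ (ih (k - 1) (by omega) (by omega) (by omega))
      have ht2 : C ((((k - 2 : ℕ) : ℝ) - 1) * p₀) * X ^ (k - 2) ∈ S := by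
        rcases eq_or_lt_of_le hk2 with rfl | hk3
        · have hx : C ((((2 - 2 : ℕ) : ℝ) - 1) * p₀) * X ^ (2 - 2)
              = (-p₀) • (1 : Polynomial ℝ) := by
            simp [smul_eq_C_mul]
          rw [hx]
          exact Submodule.smul_mem S _ h1S
        · rcases eq_or_lt_of_le (Nat.succ_le_of_lt hk3) with rfl | hk4
          · norm_num
          · rw [← smul_eq_C_mul]
            exact Submodule.smul_mem _ _ (ih (k - 2) (by omega) (by omega) (by omega))
      have hlead : C (((k - 2 : ℕ) : ℝ) * p₂ - a₂) * X ^ k ∈ S := by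
        have h2 : C (((k - 2 : ℕ) : ℝ) * p₂ - a₂) * X ^ k =
            (C (((k - 2 : ℕ) : ℝ) * p₂ - a₂) * X ^ k
              + C (((k - 2 : ℕ) : ℝ) * p₁) * X ^ (k - 1)
              + C ((((k - 2 : ℕ) : ℝ) - 1) * p₀) * X ^ (k - 2))
            - C (((k - 2 : ℕ) : ℝ) * p₁) * X ^ (k - 1)
            - C ((((k - 2 : ℕ) : ℝ) - 1) * p₀) * X ^ (k - 2) := by ring
        rw [h2]
        exact S.sub_mem (S.sub_mem hAS ht1) ht2
      have hx : (((k - 2 : ℕ) : ℝ) * p₂ - a₂)⁻¹ •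
          (C (((k - 2 : ℕ) : ℝ) * p₂ - a₂) * X ^ k) = (X : Polynomial ℝ) ^ k := by
        rw [smul_eq_C_mul, ← mul_assoc, ← C_mul, inv_mul_cancel₀ (hc (k - 2)), C_1, one_mul]
      rw [← hx]
      exact Submodule.smul_mem S _ hlead
  apply le_antisymm
  · apply sup_le
    · classical
      rw [Polynomial.degreeLE_eq_span_X_pow, Submodule.map_span]
      apply Submodule.span_le.2
      rintro q ⟨r, hr, rfl⟩
      simp only [Finset.coe_image, Set.mem_image, Finset.mem_coe, Finset.mem_range] at hr
      obtain ⟨j, hj, rfl⟩ := hr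
      have hjn : j ≤ n - 2 := by omega
      rw [hA, Aop_pow]
      have hterm : ∀ (c : ℝ) (i : ℕ), i ≤ n → (c = 0 ∨ i = 0 ∨ 2 ≤ i) → C c * X ^ i ∈ T := by
        rintro c i hin (rfl | rfl | hi)
        · simp
        · rw [pow_zero, ← smul_eq_C_mul]
          exact Submodule.smul_mem T c h1T
        · rw [← smul_eq_C_mul]
          exact Submodule.smul_mem _ _ (hXT i hi hin)
      refine T.add_mem (T.add_mem ?_ ?_) ?_
      · exact hterm _ _ (by omega) (Or.inr (Or.inr (by omega)))
      · rcases Nat.eq_zero_or_pos j with rfl | hj1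
        · exact hterm _ _ (by omega) (Or.inl (by norm_num))
        · exact hterm _ _ (by omega) (Or.inr (Or.inr (by omega)))
      · rcases Nat.lt_or_ge j 2 with hj2 | hj2
        · interval_cases j
          · exact hterm _ _ (by omega) (Or.inr (Or.inl rfl))
          · exact hterm _ _ (by omega) (Or.inl (by norm_num))
        · exact hterm _ _ (by omega) (Or.inr (Or.inr hj2))
    · exact Submodule.span_le.2 (by rintro q rfl; exact h1T)
  · apply Submodule.span_le.2
    rintro q (rfl | ⟨k, ⟨hk2, hkn⟩, rfl⟩)
    · exact h1S
    · exact key k hk2 hkn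
end

section
/- Let A = (p₂z² + p₁z + p₀)(z² - 1)∂_z + (p₂ + p₀)(z³ - 3z) - 2p₁ with p₂ + p₀ ≠ 0 and -p₀/p₂ not a positive integer (or p₂ = 0). Then for each n ≥ 2, A[P_{n-2}] ⊕ ℝ = span{1, π₃, π₄, ..., π_{n+1}}, where π_{2k+1}(z) = z^{2k+1} - (2k+1)z and π_{2k}(z) = z^{2k} - k z². -/
open Polynomial

/-- `π_{2k+1}(z) = z^{2k+1} - (2k+1)z`, `π_{2k}(z) = z^{2k} - k z²`. -/
noncomputable def piPoly (j : ℕ) : Polynomial ℝ :=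
  if j % 2 = 1 then X ^ j - C (j : ℝ) * X
  else X ^ j - C ((j / 2 : ℕ) : ℝ) * X ^ 2

lemma piPoly_odd' (t : ℕ) : piPoly (2*t+1) = X^(2*t+1) - C ((2*t+1 : ℕ):ℝ) * X := by
  rw [piPoly, if_pos (by omega)]

lemma piPoly_even' (t : ℕ) : piPoly (2*t) = X^(2*t) - C ((t : ℕ):ℝ) * X^2 := by
  rw [piPoly, if_neg (by omega), Nat.mul_div_cancel_left _ (by norm_num)]

lemma keyA (p₀ p₁ p₂ : ℝ) (k : ℕ) :
    Aop (-(C (p₂ + p₀) * (X ^ 3 - C 3 * X) - C (2 * p₁)))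
        ((C p₂ * X ^ 2 + C p₁ * X + C p₀) * (X ^ 2 - 1)) (X ^ k) =
      C ((k:ℝ)*p₂+p₂+p₀) * piPoly (k+3)
      + C ((k:ℝ)*p₁) * piPoly (k+2)
      + C ((k:ℝ)*p₀-(k:ℝ)*p₂-3*(p₂+p₀)) * piPoly (k+1)
      + C (-(((k:ℝ)+2)*p₁)) * piPoly k
      + C (-((k:ℝ)*p₀)) * piPoly (k-1) := by
  rcases Nat.lt_or_ge k 4 with h | h
  · interval_cases k <;>
    · simp only [Aop, LinearMap.coe_mk, AddHom.coe_mk, piPoly]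
      norm_num
      simp only [map_add, map_mul, map_sub, map_neg, map_one, map_zero, C_eq_natCast, map_ofNat]
      ring
  · obtain ⟨m, rfl⟩ : ∃ m, k = m + 4 := ⟨k - 4, by omega⟩
    rcases Nat.even_or_odd m with ⟨t, rfl⟩ | ⟨t, rfl⟩
    · rw [show t+t+4+3 = 2*(t+3)+1 from by omega, show t+t+4+2 = 2*(t+3) from by omega,
        show t+t+4+1 = 2*(t+2)+1 from by omega, show t+t+4-1 = 2*(t+1)+1 from by omega,
        show (t+t+4 : ℕ) = 2*(t+2) from by omega, piPoly_odd', piPoly_even',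
        piPoly_odd', piPoly_odd', piPoly_even']
      simp only [Aop, LinearMap.coe_mk, AddHom.coe_mk, derivative_X_pow]
      rw [show 2*(t+2)-1 = 2*t+3 from by omega]
      push_cast
      simp only [map_add, map_mul, map_sub, map_neg, map_one, map_zero, C_eq_natCast, map_ofNat]
      ring
    · rw [show 2*t+1+4+3 = 2*(t+4) from by omega, show 2*t+1+4+2 = 2*(t+3)+1 from by omega,
        show 2*t+1+4+1 = 2*(t+3) from by omega, show 2*t+1+4-1 = 2*(t+2) from by omega,
        show (2*t+1+4 : ℕ) = 2*(t+2)+1 from by omega, piPoly_even', piPoly_odd',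
        piPoly_even', piPoly_odd', piPoly_even']
      simp only [Aop, LinearMap.coe_mk, AddHom.coe_mk, derivative_X_pow]
      rw [show 2*(t+2)+1-1 = 2*t+4 from by omega]
      push_cast
      simp only [map_add, map_mul, map_sub, map_neg, map_one, map_zero, C_eq_natCast, map_ofNat]
      ring

lemma pi_mem (n j : ℕ) (hj : j ≤ n+1) :
    piPoly j ∈ Submodule.span ℝ (insert (1:Polynomial ℝ) (piPoly '' Set.Icc 3 (n+1))) := by
  rcases Nat.lt_or_ge j 3 with h | h
  · interval_cases j
    · have : piPoly 0 = 1 := by simp [piPoly]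
      rw [this]; exact Submodule.subset_span (Set.mem_insert _ _)
    · have : piPoly 1 = 0 := by norm_num [piPoly]
      rw [this]; exact zero_mem _
    · have : piPoly 2 = 0 := by norm_num [piPoly]
      rw [this]; exact zero_mem _
  · exact Submodule.subset_span (Set.mem_insert_of_mem _ ⟨j, Set.mem_Icc.2 ⟨h, hj⟩, rfl⟩)

/-- for
`A = (p₂z² + p₁z + p₀)(z² - 1)∂_z + (p₂ + p₀)(z³ - 3z) - 2p₁` with `p₂ + p₀ ≠ 0`
and `-p₀/p₂` not a positive integer (when `p₂ ≠ 0`), for each `n ≥ 2` one has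
`A[P_{n-2}] ⊕ ℝ = span{1, π₃, π₄, …, π_{n+1}}`. -/
theorem m_two_deformed_flag
    (p₀ p₁ p₂ : ℝ) (hsum : p₂ + p₀ ≠ 0)
    (hgen : p₂ ≠ 0 → ∀ j : ℕ, 0 < j → -p₀ / p₂ ≠ (j : ℝ)) :
    ∀ n : ℕ, 2 ≤ n →
      Submodule.map
          (Aop (-(C (p₂ + p₀) * (X ^ 3 - C 3 * X) - C (2 * p₁)))
               ((C p₂ * X ^ 2 + C p₁ * X + C p₀) * (X ^ 2 - 1)))
          (Polynomial.degreeLE ℝ ((n - 2 : ℕ) : WithBot ℕ))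
        ⊔ Submodule.span ℝ {(1 : Polynomial ℝ)}
      = Submodule.span ℝ
          (insert (1 : Polynomial ℝ) (piPoly '' Set.Icc 3 (n + 1))) := by
  set A := Aop (-(C (p₂ + p₀) * (X ^ 3 - C 3 * X) - C (2 * p₁)))
               ((C p₂ * X ^ 2 + C p₁ * X + C p₀) * (X ^ 2 - 1)) with hA
  -- coefficient nonvanishing
  have hc : ∀ k : ℕ, (k:ℝ)*p₂+p₂+p₀ ≠ 0 := by
    intro k
    by_cases hp2 : p₂ = 0
    · simpa [hp2] using hsum
    · intro h
      exact hgen hp2 (k+1) (by omega) (by push_cast; field_simp; linarith)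
  -- membership of A (X^k) in the span
  have hmemA : ∀ n k : ℕ, k + 3 ≤ n + 1 →
      A (X ^ k) ∈ Submodule.span ℝ (insert (1:Polynomial ℝ) (piPoly '' Set.Icc 3 (n+1))) := by
    intro n k hk
    rw [hA, keyA]
    refine add_mem (add_mem (add_mem (add_mem ?_ ?_) ?_) ?_) ?_ <;>
    · rw [← smul_eq_C_mul]
      exact Submodule.smul_mem _ _ (pi_mem n _ (by omega))
  -- the easy inclusion
  have hle : ∀ n : ℕ, 2 ≤ n →
      Submodule.map A (Polynomial.degreeLE ℝ ((n - 2 : ℕ) : WithBot ℕ))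
        ⊔ Submodule.span ℝ {(1 : Polynomial ℝ)}
      ≤ Submodule.span ℝ (insert (1 : Polynomial ℝ) (piPoly '' Set.Icc 3 (n + 1))) := by
    intro n hn
    refine sup_le ?_ (Submodule.span_mono (by simp))
    rw [degreeLE_eq_span_X_pow, Submodule.map_span]
    refine Submodule.span_le.2 ?_
    rintro _ ⟨x, hx, rfl⟩
    simp only [Finset.coe_image, Finset.coe_range, Set.mem_image, Set.mem_Iio] at hx
    obtain ⟨k, hk, rfl⟩ := hx
    exact hmemA n k (by omega)
  intro n hn
  induction n, hn using Nat.le_induction with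
  | base =>
    refine le_antisymm (hle 2 le_rfl) (Submodule.span_le.2 ?_)
    rintro x (rfl | ⟨j, hj, rfl⟩)
    · exact le_sup_right (α := Submodule ℝ (Polynomial ℝ))
        (Submodule.subset_span rfl)
    · simp only [Set.mem_Icc] at hj
      obtain rfl : j = 3 := by omega
      have h1 : (1 : Polynomial ℝ) ∈
          Submodule.map A (Polynomial.degreeLE ℝ ((2 - 2 : ℕ) : WithBot ℕ))
            ⊔ Submodule.span ℝ {(1 : Polynomial ℝ)} :=
        le_sup_right (α := Submodule ℝ (Polynomial ℝ)) (Submodule.subset_span rfl)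
      have h2 : A (X ^ 0) ∈
          Submodule.map A (Polynomial.degreeLE ℝ ((2 - 2 : ℕ) : WithBot ℕ))
            ⊔ Submodule.span ℝ {(1 : Polynomial ℝ)} := by
        refine le_sup_left (α := Submodule ℝ (Polynomial ℝ)) ?_
        exact Submodule.mem_map_of_mem (mem_degreeLE.2 (by simp))
      have hk0 := keyA p₀ p₁ p₂ 0
      have hpi0 : piPoly 0 = 1 := by simp [piPoly]
      have hpi1 : piPoly 1 = 0 := by norm_num [piPoly]
      rw [hpi0, hpi1] at hk0
      have hseq : (p₂+p₀) • piPoly 3 = A (X^0) + (2*p₁) • (1 : Polynomial ℝ) := by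
        rw [hA, hk0, smul_eq_C_mul, smul_eq_C_mul]
        push_cast
        simp only [map_add, map_mul, map_sub, map_neg, map_one, map_zero, C_eq_natCast, map_ofNat]
        ring
      refine (Submodule.smul_mem_iff _ hsum).1 ?_
      rw [hseq]
      exact add_mem h2 (Submodule.smul_mem _ _ h1)
  | succ n hn ih =>
    have hmono : Submodule.map A (Polynomial.degreeLE ℝ ((n - 2 : ℕ) : WithBot ℕ))
        ⊔ Submodule.span ℝ {(1 : Polynomial ℝ)}
        ≤ Submodule.map A (Polynomial.degreeLE ℝ ((n + 1 - 2 : ℕ) : WithBot ℕ))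
        ⊔ Submodule.span ℝ {(1 : Polynomial ℝ)} := by
      refine sup_le_sup ?_ le_rfl
      refine Submodule.map_mono (degreeLE_mono ?_)
      exact_mod_cast Nat.sub_le_sub_right (Nat.le_succ n) 2
    refine le_antisymm (hle (n+1) (by omega)) (Submodule.span_le.2 ?_)
    rintro x (rfl | ⟨j, hj, rfl⟩)
    · exact le_sup_right (α := Submodule ℝ (Polynomial ℝ)) (Submodule.subset_span rfl)
    · simp only [Set.mem_Icc] at hj
      rcases Nat.lt_or_ge j (n+2) with hj2 | hj2
      · exact hmono (ih ▸ Submodule.subset_span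
          (Set.mem_insert_of_mem _ ⟨j, Set.mem_Icc.2 ⟨hj.1, by omega⟩, rfl⟩))
      · obtain rfl : j = n + 2 := by omega
        -- use A (X^(n-1))
        have hk := keyA p₀ p₁ p₂ (n-1)
        rw [show n-1+3 = n+2 from by omega, show n-1+2 = n+1 from by omega,
          show n-1+1 = n from by omega] at hk
        have hAX : A (X ^ (n-1)) ∈
            Submodule.map A (Polynomial.degreeLE ℝ ((n + 1 - 2 : ℕ) : WithBot ℕ))
              ⊔ Submodule.span ℝ {(1 : Polynomial ℝ)} := by
          refine le_sup_left (α := Submodule ℝ (Polynomial ℝ)) ?_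
          refine Submodule.mem_map_of_mem (mem_degreeLE.2 ?_)
          rw [degree_X_pow]
          have h9 : n - 1 ≤ n + 1 - 2 := by omega
          exact_mod_cast h9
        set c : ℝ := ((n-1 : ℕ):ℝ)*p₂+p₂+p₀ with hcdef
        have hcne : c ≠ 0 := hc (n-1)
        set r : Polynomial ℝ := C (((n-1:ℕ):ℝ)*p₁) * piPoly (n+1)
          + C (((n-1:ℕ):ℝ)*p₀-((n-1:ℕ):ℝ)*p₂-3*(p₂+p₀)) * piPoly n
          + C (-((((n-1:ℕ):ℝ)+2)*p₁)) * piPoly (n-1)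
          + C (-(((n-1:ℕ):ℝ)*p₀)) * piPoly (n-1-1) with hrdef
        have hr : r ∈ Submodule.span ℝ (insert (1:Polynomial ℝ) (piPoly '' Set.Icc 3 (n+1))) := by
          rw [hrdef]
          refine add_mem (add_mem (add_mem ?_ ?_) ?_) ?_ <;>
          · rw [← smul_eq_C_mul]
            exact Submodule.smul_mem _ _ (pi_mem n _ (by omega))
        have hrmem : r ∈ Submodule.map A (Polynomial.degreeLE ℝ ((n + 1 - 2 : ℕ) : WithBot ℕ))
              ⊔ Submodule.span ℝ {(1 : Polynomial ℝ)} := hmono (ih ▸ hr)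
        have hseq : c • piPoly (n+2) = A (X^(n-1)) - r := by
          rw [hA, hk, hrdef, smul_eq_C_mul]
          ring
        refine (Submodule.smul_mem_iff _ hcne).1 ?_
        rw [hseq]
        exact sub_mem hAX hrmem
end

section
/- The operator T₂ = (z² - 1)∂_zz - 2z∂_z maps each π_j (j ≥ 3) into span{1, π₃, ..., π_j}; in particular T₂ preserves the subspaces M̂_n = span{1, π₃, π₄, ..., π_{n+1}} for all n. -/
open Polynomial

/-- The operator `T₂ f = (z² - 1) f'' - 2z f'`. -/
noncomputable def T₂ (f : Polynomial ℝ) : Polynomial ℝ :=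
  ((X : Polynomial ℝ) ^ 2 - 1) * derivative (derivative f) - 2 * X * derivative f

lemma T2_odd_aux (k : ℕ) :
    T₂ (piPoly (2*k+3)) = C ((2*(k:ℝ)+3)*(2*k)) * piPoly (2*k+3)
      - C ((2*(k:ℝ)+3)*(2*k+2)) * piPoly (2*k+1) := by
  have h1 : (2*k+3) % 2 = 1 := by omega
  have h2 : (2*k+1) % 2 = 1 := by omega
  simp only [piPoly, h1, h2, if_pos, T₂, derivative_sub, derivative_X_pow, derivative_C_mul,
    derivative_X, mul_one, derivative_C, Nat.add_sub_cancel, sub_zero]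
  push_cast
  simp only [map_add, map_mul, map_ofNat, map_one]
  ring

lemma T2_even_aux (k : ℕ) :
    T₂ (piPoly (2*k+4)) = C ((2*(k:ℝ)+4)*(2*k+1)) * piPoly (2*k+4)
      - C ((2*(k:ℝ)+4)*(2*k+3)) * piPoly (2*k+2) + C (2*(k:ℝ)+4) := by
  simp only [piPoly, show (2*k+4)%2 = 0 from by omega, show (2*k+2)%2 = 0 from by omega,
    show (2*k+4)/2 = k+2 from by omega, show (2*k+2)/2 = k+1 from by omega,
    Nat.zero_ne_one, reduceIte, T₂, derivative_sub, derivative_X_pow, derivative_C_mul,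
    derivative_X, mul_one, derivative_C, sub_zero,
    show 2*k+4-1 = 2*k+3 from by omega, show 2*k+3-1 = 2*k+2 from by omega,
    show (2:ℕ)-1 = 1 from rfl, pow_one]
  push_cast
  simp only [map_add, map_mul, map_ofNat, map_one]
  ring

lemma piPoly_one_eq : piPoly 1 = 0 := by simp [piPoly]
lemma piPoly_two_eq : piPoly 2 = 0 := by simp [piPoly]
lemma piPoly_zero_eq : piPoly 0 = 1 := by simp [piPoly]

lemma pi_mem_span (j i : ℕ) (hij : i ≤ j) :
    piPoly i ∈ Submodule.span ℝ (insert (1 : Polynomial ℝ) (piPoly '' Set.Icc 3 j)) := by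
  rcases lt_or_ge i 3 with h | h
  · interval_cases i
    · rw [piPoly_zero_eq]; exact Submodule.subset_span (Set.mem_insert _ _)
    · rw [piPoly_one_eq]; exact zero_mem _
    · rw [piPoly_two_eq]; exact zero_mem _
  · exact Submodule.subset_span (Set.mem_insert_of_mem _ ⟨i, ⟨h, hij⟩, rfl⟩)

lemma C_mem_span (j : ℕ) (a : ℝ) :
    C a ∈ Submodule.span ℝ (insert (1 : Polynomial ℝ) (piPoly '' Set.Icc 3 j)) := by
  have h : C a = a • (1 : Polynomial ℝ) := by rw [smul_eq_C_mul, mul_one]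
  rw [h]
  exact Submodule.smul_mem _ _ (Submodule.subset_span (Set.mem_insert _ _))

lemma T2_pi_mem (j : ℕ) (hj : 3 ≤ j) :
    T₂ (piPoly j) ∈ Submodule.span ℝ (insert (1 : Polynomial ℝ) (piPoly '' Set.Icc 3 j)) := by
  obtain ⟨k, rfl | rfl⟩ : ∃ k, j = 2*k+3 ∨ j = 2*k+4 := by
    rcases Nat.even_or_odd j with ⟨m, hm⟩ | ⟨m, hm⟩
    · exact ⟨m - 2, Or.inr (by omega)⟩
    · exact ⟨m - 1, Or.inl (by omega)⟩
  · rw [T2_odd_aux]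
    refine sub_mem ?_ ?_ <;> rw [← smul_eq_C_mul] <;>
      exact Submodule.smul_mem _ _ (pi_mem_span _ _ (by omega))
  · rw [T2_even_aux]
    refine add_mem (sub_mem ?_ ?_) (C_mem_span _ _) <;> rw [← smul_eq_C_mul] <;>
      exact Submodule.smul_mem _ _ (pi_mem_span _ _ (by omega))

lemma T2_add (f g : Polynomial ℝ) : T₂ (f + g) = T₂ f + T₂ g := by
  simp only [T₂, derivative_add]; ring

lemma T2_smul (a : ℝ) (f : Polynomial ℝ) : T₂ (a • f) = a • T₂ f := by
  simp only [T₂, smul_eq_C_mul, derivative_C_mul]; ring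

/-- `T₂` maps each `π_j` (`j ≥ 3`) into `span{1, π₃, …, π_j}`;
in particular `T₂` preserves `M̂_n = span{1, π₃, …, π_{n+1}}` for every `n`. -/
theorem T2_preserves_deformed_flag :
    (∀ j : ℕ, 3 ≤ j →
      T₂ (piPoly j) ∈ Submodule.span ℝ (insert (1 : Polynomial ℝ) (piPoly '' Set.Icc 3 j))) ∧
    (∀ n : ℕ, ∀ f : Polynomial ℝ,
      f ∈ Submodule.span ℝ (insert (1 : Polynomial ℝ) (piPoly '' Set.Icc 3 (n + 1))) →
      T₂ f ∈ Submodule.span ℝ (insert (1 : Polynomial ℝ) (piPoly '' Set.Icc 3 (n + 1)))) := by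
  refine ⟨T2_pi_mem, ?_⟩
  intro n f hf
  induction hf using Submodule.span_induction with
  | mem x hx =>
    rcases hx with rfl | ⟨i, ⟨hi3, hile⟩, rfl⟩
    · have : T₂ (1 : Polynomial ℝ) = 0 := by simp [T₂]
      rw [this]; exact zero_mem _
    · exact Submodule.span_mono
        (Set.insert_subset_insert (Set.image_mono (Set.Icc_subset_Icc_right hile)))
        (T2_pi_mem i hi3)
  | zero =>
    have : T₂ (0 : Polynomial ℝ) = 0 := by simp [T₂]
    rw [this]; exact zero_mem _
  | add x y _ _ hx hy => rw [T2_add]; exact add_mem hx hy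
  | smul a x _ hx => rw [T2_smul]; exact Submodule.smul_mem _ _ hx
end

section
/- Suppose T = p∂_zz + q∂_z satisfies Tφ = λ₀φ with λ₀ ≠ 0, where φ'/φ = a/b for coprime polynomials a, b. Then the condition p·a' - λ₀·b = 0 (i.e. p a' = λ₀ b) holds if and only if b'/b - q/p - a/b = 0, i.e. the function φ̂ = b·exp(-∫(q/p + a/b)) is constant. -/
/-- suppose `T = p ∂_zz + q ∂_z` satisfies `Tφ = λ₀ φ` with `λ₀ ≠ 0`,
where `φ'/φ = a/b`.  Then `p a' - λ₀ b = 0` holds if and only if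
`(b' - a)/b - q/p = 0` (i.e. `φ̂ = b·exp(-∫(q/p + a/b))` is constant). -/
theorem backward_ground_state_condition
    (p q a b φ : ℝ → ℝ) (lam0 : ℝ)
    (hp : ContDiff ℝ (⊤ : ℕ∞) p) (hq : ContDiff ℝ (⊤ : ℕ∞) q)
    (ha : ContDiff ℝ (⊤ : ℕ∞) a) (hb : ContDiff ℝ (⊤ : ℕ∞) b)
    (hφ : ContDiff ℝ (⊤ : ℕ∞) φ)
    (hp0 : ∀ z, p z ≠ 0) (hb0 : ∀ z, b z ≠ 0) (hφ0 : ∀ z, φ z ≠ 0)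
    (hlog : ∀ z, deriv φ z = (a z / b z) * φ z)
    (heig : ∀ z, p z * deriv (deriv φ) z + q z * deriv φ z = lam0 * φ z)
    (hlam : lam0 ≠ 0) :
    (∀ z, p z * deriv a z - lam0 * b z = 0) ↔
    (∀ z, (deriv b z - a z) / b z - q z / p z = 0) := by
  have hda : Differentiable ℝ a := ha.differentiable (by simp)
  have hdb : Differentiable ℝ b := hb.differentiable (by simp)
  have hdφ : Differentiable ℝ φ := hφ.differentiable (by simp)
  have hdq : Differentiable ℝ (fun z => a z / b z) := hda.div hdb hb0
  have hE : ∀ z, p z * (deriv a z * b z - a z * deriv b z + (a z)^2)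
      + q z * (a z * b z) = lam0 * (b z)^2 := by
    intro z
    have h1 : deriv φ = fun z => (a z / b z) * φ z := funext hlog
    have h2 : deriv (deriv φ) z
        = deriv (fun z => a z / b z) z * φ z + (a z / b z) * ((a z / b z) * φ z) := by
      rw [h1]
      rw [deriv_fun_mul (hdq z) (hdφ z), hlog z]
    have h3 : deriv (fun z => a z / b z) z
        = (deriv a z * b z - a z * deriv b z) / (b z)^2 :=
      deriv_div (hda z) (hdb z) (hb0 z)
    have h4 := heig z
    rw [h2, h3, hlog z] at h4
    have hbz := hb0 z; have hφz := hφ0 z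
    field_simp at h4
    have h5 : (p z * (deriv a z * b z - a z * deriv b z + (a z)^2)
        + q z * (a z * b z) - lam0 * (b z)^2) * (φ z * (b z)^3) = 0 := by
      linear_combination (φ z * (b z)^3) * h4
    have h6 := (mul_eq_zero.mp h5).resolve_right
      (mul_ne_zero hφz (pow_ne_zero 3 hbz))
    linarith
  constructor
  · -- (ii) ⇒ (iii)
    intro h z
    have key : ∀ w, a w * (p w * deriv b w - p w * a w - q w * b w) = 0 := by
      intro w
      have h1 := hE w
      have h2 := h w
      linear_combination (-1 : ℝ) * h1 + b w * h2
    have hsuff : p z * deriv b z - p z * a z - q z * b z = 0 := by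
      by_contra hg
      have hdbc : Continuous (deriv b) := hb.continuous_deriv (by simp)
      have hgc : Continuous (fun w => p w * deriv b w - p w * a w - q w * b w) :=
        ((hp.continuous.mul hdbc).sub (hp.continuous.mul ha.continuous)).sub
          (hq.continuous.mul hb.continuous)
      have hev : ∀ᶠ w in nhds z,
          (fun w => p w * deriv b w - p w * a w - q w * b w) w ≠ 0 :=
        hgc.continuousAt.eventually_ne hg
      have haev : a =ᶠ[nhds z] fun _ => 0 := by
        filter_upwards [hev] with w hw
        rcases mul_eq_zero.mp (key w) with h' | h'
        · exact h'
        · exact absurd h' hw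
      have hda0 : deriv a z = 0 := by
        rw [haev.deriv_eq]; simp
      have hz := h z
      rw [hda0] at hz
      simp only [mul_zero, zero_sub, neg_eq_zero] at hz
      exact (mul_ne_zero hlam (hb0 z)) hz
    have hbz := hb0 z; have hpz := hp0 z
    rw [sub_eq_zero, div_eq_div_iff hbz hpz]
    linear_combination hsuff
  · -- (iii) ⇒ (ii)
    intro h z
    have h3 := h z
    have hbz := hb0 z; have hpz := hp0 z
    rw [sub_eq_zero, div_eq_div_iff hbz hpz] at h3
    have h1 := hE z
    have h4 : (p z * deriv a z) * b z = (lam0 * b z) * b z := by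
      linear_combination h1 + a z * h3
    have h5 := mul_right_cancel₀ hbz h4
    linarith
end
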